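/- arXiv:2211.02032 — 7 statements merged into one kernel-verified Lean document; each statement's English description precedes it below -/
import Mathlib

section
/- Let s ≤ t be real numbers, let b₁, b₂ : ℝ → ℝ be continuous on [s, t], set a := b₁ + b₂, and let q ∈ ℝ. Define F(s) := q·exp(−∫_s^t a(u) du) + ∫_s^t b₁(u)·exp(−∫_s^u a(v) dv) du. Then 1 − F(s) = (1 − q)·exp(−∫_s^t a(u) du) + ∫_s^t b₂(u)·exp(−∫_s^u a(v) dv) du. -/
/-!
With `A(u) = ∫_s^u a`, the integrand `a(u) exp(-A(u))` is the derivative of `-exp(-A(u))`, so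
`∫_s^t (b₁ + b₂) exp(-A) = 1 - exp(-A(t))`. Splitting the left side into its `b₁` and `b₂` parts
and substituting the definition of `F` gives the identity.
-/

open intervalIntegral Real Set

section ExpNegPrimitive

variable {c : ℝ → ℝ} {s t : ℝ}

theorem continuousOn_exp_neg_primitive (hc : ContinuousOn c (uIcc s t)) :
    ContinuousOn (fun u => exp (-∫ v in s..u, c v)) (uIcc s t) :=
  (continuousOn_primitive_interval' hc.intervalIntegrable left_mem_uIcc).neg.rexp

theorem hasDerivAt_neg_exp_neg_primitive {x : ℝ} (hc : ContinuousOn c (uIcc s t))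
    (hx : x ∈ Ioo (min s t) (max s t)) :
    HasDerivAt (fun u => -exp (-∫ v in s..u, c v)) (c x * exp (-∫ v in s..x, c v)) x := by
  have hcx : ContinuousAt c x := hc.continuousAt (Icc_mem_nhds hx.1 hx.2)
  have hprim : HasDerivAt (fun u => ∫ v in s..u, c v) (c x) x :=
    integral_hasDerivAt_right
      (hc.mono (uIcc_subset_uIcc left_mem_uIcc (Ioo_subset_Icc_self hx))).intervalIntegrable
      (hc.mono Ioo_subset_Icc_self |>.stronglyMeasurableAtFilter isOpen_Ioo x hx) hcx
  have h : HasDerivAt (fun u => -exp (-∫ v in s..u, c v))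
      (-(exp (-∫ v in s..x, c v) * -c x)) x := hprim.neg.exp.neg
  rwa [mul_neg, neg_neg, mul_comm] at h

theorem integral_mul_exp_neg_primitive (hc : ContinuousOn c (uIcc s t)) :
    ∫ u in s..t, c u * exp (-∫ v in s..u, c v) = 1 - exp (-∫ u in s..t, c u) := by
  rw [integral_eq_sub_of_hasDeriv_right (continuousOn_exp_neg_primitive hc).neg
    (fun x hx => (hasDerivAt_neg_exp_neg_primitive hc hx).hasDerivWithinAt)
    (hc.mul (continuousOn_exp_neg_primitive hc)).intervalIntegrable]
  simp only [Pi.neg_apply, integral_same, neg_zero, exp_zero]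
  ring

end ExpNegPrimitive

/-- Dual expression for the smoothed filter. -/
theorem smoothed_filter_dual_expression
    (s t : ℝ) (hst : s ≤ t) (b₁ b₂ : ℝ → ℝ)
    (hb₁ : ContinuousOn b₁ (Set.Icc s t))
    (hb₂ : ContinuousOn b₂ (Set.Icc s t))
    (a : ℝ → ℝ) (ha : a = fun u => b₁ u + b₂ u)
    (q F : ℝ)
    (hF : F = q * Real.exp (-∫ u in s..t, a u)
            + ∫ u in s..t, b₁ u * Real.exp (-∫ v in s..u, a v)) :
    1 - F = (1 - q) * Real.exp (-∫ u in s..t, a u)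
          + ∫ u in s..t, b₂ u * Real.exp (-∫ v in s..u, a v) := by
  rw [← uIcc_of_le hst] at hb₁ hb₂
  have ha_cont : ContinuousOn a (uIcc s t) := ha ▸ hb₁.add hb₂
  have hE := continuousOn_exp_neg_primitive ha_cont
  have hsplit : ∫ u in s..t, a u * exp (-∫ v in s..u, a v)
      = (∫ u in s..t, b₁ u * exp (-∫ v in s..u, a v))
        + ∫ u in s..t, b₂ u * exp (-∫ v in s..u, a v) := by
    have hint : ∀ b, ContinuousOn b (uIcc s t) →
        IntervalIntegrable (fun u => b u * exp (-∫ v in s..u, a v)) MeasureTheory.volume s t :=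
      fun b hb => (hb.mul hE).intervalIntegrable
    rw [← integral_add (hint b₁ hb₁) (hint b₂ hb₂)]
    simp only [ha, add_mul]
  have htotal := integral_mul_exp_neg_primitive ha_cont
  rw [hF]
  linarith
end

section
/- Let s ≤ t be real numbers and let a, b : [s, t] → ℝ be continuous functions satisfying a(v) − a(s) = (b(v) − b(s)) + ∫_s^v exp(−a(u)) du for every v ∈ [s, t]. Then exp(−a(t))·∫_s^t exp(b(t) − b(u)) du < 1, and a(t) − a(s) = (b(t) − b(s)) − log(1 − exp(−a(t))·∫_s^t exp(b(t) − b(u)) du). -/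
/-!
Put `F(v) = ∫_s^v e^{-a}`. The hypothesis says `b = a - F` up to a constant, so
`e^{b t - b u} = e^{a t - F t} · e^{F u} F'(u)`, and since `e^{F u} F'(u)` is the derivative of `e^{F u}`,
`e^{-a t} ∫_s^t e^{b t - b u} du = e^{-F t} (e^{F t} - 1) = 1 - e^{-F t}`.
This is `< 1`, and its logarithm recovers `-F t = (b t - b s) - (a t - a s)`.
-/

open intervalIntegral Real Set

theorem integral_exp_primitive_mul {f : ℝ → ℝ} {s t : ℝ} (hf : ContinuousOn f (uIcc s t)) :
    ∫ u in s..t, exp (∫ x in s..u, f x) * f u = exp (∫ x in s..t, f x) - 1 := by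
  have hderiv : ∀ x ∈ Ioo (min s t) (max s t),
      HasDerivWithinAt (fun u ↦ ∫ y in s..u, f y) (f x) (Ioi x) x := fun x hx ↦
    (integral_hasDerivAt_right
      (hf.mono (uIcc_subset_uIcc_left (Ioo_subset_Icc_self hx))).intervalIntegrable
      ((hf.mono Ioo_subset_Icc_self).stronglyMeasurableAtFilter isOpen_Ioo x hx)
      (hf.continuousAt (Icc_mem_nhds hx.1 hx.2))).hasDerivWithinAt
  simpa [integral_exp] using integral_comp_mul_deriv''
    (continuousOn_primitive_interval hf.integrableOn_uIcc) hderiv hf continuousOn_exp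

theorem exp_neg_mul_integral_exp_sub_eq {s t : ℝ} (hst : s ≤ t) {a b : ℝ → ℝ}
    (ha : ContinuousOn a (Icc s t))
    (hab : ∀ v ∈ Icc s t, a v - a s = (b v - b s) + ∫ u in s..v, exp (-a u)) :
    exp (-a t) * ∫ u in s..t, exp (b t - b u) = 1 - exp (-∫ u in s..t, exp (-a u)) := by
  set F : ℝ → ℝ := fun v ↦ ∫ u in s..v, exp (-a u)
  have hexp : ContinuousOn (fun u ↦ exp (-a u)) (uIcc s t) := by
    rw [uIcc_of_le hst]
    exact ha.neg.rexp
  have hintegrand : ∀ u ∈ uIcc s t,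
      exp (b t - b u) = exp (a t - F t) * (exp (F u) * exp (-a u)) := by
    intro u hu
    rw [uIcc_of_le hst] at hu
    have hu' := hab u hu
    have ht := hab t ⟨hst, le_rfl⟩
    rw [← exp_add, ← exp_add]
    congr 1
    linarith
  have hexponent : -a t + (a t - F t) = -F t := by ring
  calc exp (-a t) * ∫ u in s..t, exp (b t - b u)
      = exp (-a t) * exp (a t - F t) * (exp (F t) - 1) := by
        rw [integral_congr hintegrand, integral_const_mul, integral_exp_primitive_mul hexp,
          mul_assoc]
    _ = 1 - exp (-F t) := by
        rw [← exp_add, hexponent, mul_sub, ← exp_add, neg_add_cancel, exp_zero, mul_one]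

theorem path_transform_backward_general
    (s t : ℝ) (hst : s ≤ t) (a b : ℝ → ℝ)
    (ha : ContinuousOn a (Set.Icc s t))
    (hab : ∀ v ∈ Set.Icc s t,
      a v - a s = (b v - b s) + ∫ u in s..v, Real.exp (-a u)) :
    Real.exp (-a t) * (∫ u in s..t, Real.exp (b t - b u)) < 1 ∧
    a t - a s = (b t - b s)
      - Real.log (1 - Real.exp (-a t) * ∫ u in s..t, Real.exp (b t - b u)) := by
  rw [exp_neg_mul_integral_exp_sub_eq hst ha hab]
  refine ⟨sub_lt_self 1 (exp_pos _), ?_⟩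
  rw [sub_sub_cancel, log_exp]
  linarith [hab t ⟨hst, le_rfl⟩]

/-- Backward integration formula for paths related by `da = db + e^{-a} dt`. -/
theorem path_transform_backward
    (s t : ℝ) (hst : s ≤ t) (a b : ℝ → ℝ)
    (ha : ContinuousOn a (Set.Icc s t))
    (hb : ContinuousOn b (Set.Icc s t))
    (hab : ∀ v ∈ Set.Icc s t,
      a v - a s = (b v - b s) + ∫ u in s..v, Real.exp (-a u)) :
    Real.exp (-a t) * (∫ u in s..t, Real.exp (b t - b u)) < 1 ∧
    a t - a s = (b t - b s)
      - Real.log (1 - Real.exp (-a t) * ∫ u in s..t, Real.exp (b t - b u)) :=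
  path_transform_backward_general s t hst a b ha hab
end

section
/- Let s ≤ t be real numbers and let a, b : [s, t] → ℝ be continuous functions satisfying a(v) − a(s) = (b(v) − b(s)) + ∫_s^v exp(−a(u)) du for every v ∈ [s, t]. Then ∫_s^t exp(a(t) − a(u)) du = −exp(a(t))·log(1 − exp(−a(t))·∫_s^t exp(b(t) − b(u)) du). -/
open intervalIntegral Real

/-
With `F v = ∫_s^v e^{-a}`, the hypothesis says `b(t) - b(u) = (a(t) - a(u)) - (F(t) - F(u))`, so
`∫_s^t e^{b(t)-b(u)} du = e^{a(t)-F(t)} ∫_s^t F'(u) e^{F(u)} du = e^{a(t)} (1 - e^{-F(t)})`.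
Hence the argument of the logarithm is `e^{-F(t)}`, and the right-hand side is `e^{a(t)} F(t)`,
which is the left-hand side.
-/

theorem integral_mul_exp_integral {f : ℝ → ℝ} {s t : ℝ}
    (hf : ContinuousOn f (Set.uIcc s t)) :
    ∫ u in s..t, f u * exp (∫ v in s..u, f v) = exp (∫ v in s..t, f v) - 1 := by
  set F : ℝ → ℝ := fun u => ∫ v in s..u, f v
  have hF_cont : ContinuousOn F (Set.uIcc s t) :=
    continuousOn_primitive_interval hf.integrableOn_uIcc
  have hF_deriv : ∀ u ∈ Set.Ioo (min s t) (max s t), HasDerivAt F (f u) u := by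
    intro u hu
    refine integral_hasDerivAt_right ?_ ?_ (hf.continuousAt (Icc_mem_nhds hu.1 hu.2))
    · exact (hf.mono (Set.uIcc_subset_uIcc Set.left_mem_uIcc
        (Set.Ioo_subset_Icc_self hu))).intervalIntegrable
    · exact (hf.mono Set.Ioo_subset_Icc_self).stronglyMeasurableAtFilter isOpen_Ioo u hu
  have hintegrable : IntervalIntegrable (fun u => f u * exp (F u)) MeasureTheory.volume s t :=
    (hf.mul (continuous_exp.comp_continuousOn hF_cont)).intervalIntegrable
  rw [integral_eq_sub_of_hasDeriv_right (continuous_exp.comp_continuousOn hF_cont)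
    (fun u hu => ((hF_deriv u hu).exp.congr_deriv (mul_comm _ _)).hasDerivWithinAt) hintegrable]
  simp [F]

theorem damping_integral_closed_form_general
    (s t : ℝ) (hst : s ≤ t) (a b : ℝ → ℝ)
    (ha : ContinuousOn a (Set.Icc s t))
    (hab : ∀ v ∈ Set.Icc s t,
      a v - a s = (b v - b s) + ∫ u in s..v, Real.exp (-a u)) :
    ∫ u in s..t, Real.exp (a t - a u)
      = -Real.exp (a t)
          * Real.log (1 - Real.exp (-a t) * ∫ u in s..t, Real.exp (b t - b u)) := by
  set F : ℝ → ℝ := fun v => ∫ u in s..v, exp (-a u)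
  have hexp_neg_a : ContinuousOn (fun u => exp (-a u)) (Set.uIcc s t) := by
    rw [Set.uIcc_of_le hst]; exact continuous_exp.comp_continuousOn ha.neg
  have hdrive : ∫ u in s..t, exp (b t - b u) = exp (a t) * (1 - exp (-F t)) :=
    calc ∫ u in s..t, exp (b t - b u)
        = ∫ u in s..t, exp (a t - F t) * (exp (-a u) * exp (F u)) := by
          refine integral_congr fun u hu => ?_
          rw [Set.uIcc_of_le hst] at hu
          have hu_rel := hab u hu
          have ht_rel := hab t ⟨hst, le_rfl⟩
          simp only [← exp_add]
          congr 1
          linarith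
      _ = exp (a t - F t) * (exp (F t) - 1) := by
          rw [integral_const_mul, integral_mul_exp_integral hexp_neg_a]
      _ = exp (a t) * (1 - exp (-F t)) := by
          rw [exp_sub, exp_neg]; field_simp
  have hdamp : ∫ u in s..t, exp (a t - a u) = exp (a t) * F t := by
    simp only [F, ← integral_const_mul, ← exp_add, sub_eq_add_neg]
  rw [hdrive, hdamp, ← mul_assoc, ← exp_add, neg_add_cancel, exp_zero, one_mul, sub_sub_cancel,
    log_exp]
  ring

/-- Closed form for the damping integral `∫_s^t e^{a(t)-a(u)} du` via the driving path `b`. -/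
theorem damping_integral_closed_form
    (s t : ℝ) (hst : s ≤ t) (a b : ℝ → ℝ)
    (ha : ContinuousOn a (Set.Icc s t))
    (hb : ContinuousOn b (Set.Icc s t))
    (hab : ∀ v ∈ Set.Icc s t,
      a v - a s = (b v - b s) + ∫ u in s..v, Real.exp (-a u)) :
    ∫ u in s..t, Real.exp (a t - a u)
      = -Real.exp (a t)
          * Real.log (1 - Real.exp (-a t) * ∫ u in s..t, Real.exp (b t - b u)) :=
  damping_integral_closed_form_general s t hst a b ha hab
end

section
/- Let H > 0, let 0 < ε < η < 1/2, and let M ∈ ℝ with M < 1 − 2η. Let π : [0, H] → [0, 1] be a function, let x : [0, H] → ℝ take values in {0, 1}, and let 𝕏 be a nonempty compact subset of [0, H] × [0, 1] ⊆ ℝ². Let t ∈ [0, H] and assume: (i) min(π(t), 1 − π(t)) ≤ ε; (ii) the Hausdorff distance (for the Euclidean distance on ℝ²) between the graph {(u, π(u)) : u ∈ [0, H]} and 𝕏 is at most ε; (iii) for every (s, y) ∈ 𝕏 with |s − t| ≤ ε one has |y − x(s)| ≤ M; (iv) for every s ∈ [0, H] with |s − t| ≤ ε one has x(s) = x(t).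 Then |π(t) − x(t)| ≤ ε. -/
/-!
By compactness of `𝕏`, the graph point `(t, π t)` has a nearest spike `p`, at distance at most `ε`.
Its time `p 0` is `ε`-close to `t`, so `x (p 0) = x t` and `|p 1 - x t| ≤ M`; hence
`|π t - x t| ≤ M + ε < 1 - ε`. Since `π t ∈ [0, 1]` and `x t ∈ {0, 1}`, the two numbers `π t` and
`1 - π t` are `|π t - x t|` and `1 - |π t - x t| > ε` in some order, so `min (π t) (1 - π t) ≤ ε`
forces `|π t - x t| ≤ ε`.
-/

open Set Metric Bornology

theorem Metric.exists_mem_dist_le_of_hausdorffDist_le {α : Type*} [PseudoMetricSpace α]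
    {s t : Set α} {x : α} {r : ℝ} (hx : x ∈ s) (hs : IsBounded s) (ht : IsCompact t)
    (hne : t.Nonempty) (h : hausdorffDist s t ≤ r) : ∃ y ∈ t, dist x y ≤ r := by
  obtain ⟨y, hy, hxy⟩ := ht.exists_infDist_eq_dist hne x
  refine ⟨y, hy, hxy ▸ (infDist_le_hausdorffDist_of_mem hx ?_).trans h⟩
  exact hausdorffEDist_ne_top_of_nonempty_of_bounded ⟨x, hx⟩ hne hs ht.isBounded

theorem isBounded_euclidean_graph {a b c d : ℝ} {f : ℝ → ℝ} (hf : ∀ u ∈ Icc a b, f u ∈ Icc c d) :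
    IsBounded {p : EuclideanSpace ℝ (Fin 2) | ∃ u ∈ Icc a b, p = !₂[u, f u]} := by
  refine ((isCompact_Icc (a := ![a, c]) (b := ![b, d])).image
    (PiLp.continuous_toLp 2 _)).isBounded.subset ?_
  rintro _ ⟨u, hu, rfl⟩
  refine ⟨![u, f u], ⟨?_, ?_⟩, rfl⟩ <;> intro i <;> fin_cases i
  exacts [hu.1, (hf u hu).1, hu.2, (hf u hu).2]

theorem abs_sub_le_of_min_le {a ξ ε : ℝ} (ha : a ∈ Icc 0 1) (hξ : ξ = 0 ∨ ξ = 1)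
    (hmin : min a (1 - a) ≤ ε) (hlt : |a - ξ| < 1 - ε) : |a - ξ| ≤ ε := by
  rcases hξ with rfl | rfl
  · rw [sub_zero, abs_of_nonneg ha.1] at *
    rcases min_le_iff.1 hmin with h | h <;> linarith
  · rw [abs_sub_comm, abs_of_nonneg (sub_nonneg.2 ha.2)] at *
    rcases min_le_iff.1 hmin with h | h <;> linarith

theorem filter_close_to_hidden_state_outside_excursions_general
    (H ε η M : ℝ) (hεη : ε < η)
    (hM : M < 1 - 2 * η)
    (π x : ℝ → ℝ)
    (hπ : ∀ u ∈ Set.Icc (0 : ℝ) H, π u ∈ Set.Icc (0 : ℝ) 1)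
    (hx : ∀ s ∈ Set.Icc (0 : ℝ) H, x s = 0 ∨ x s = 1)
    (𝕏 : Set (EuclideanSpace ℝ (Fin 2)))
    (h𝕏ne : 𝕏.Nonempty) (h𝕏c : IsCompact 𝕏)
    (h𝕏sub : ∀ p ∈ 𝕏, p 0 ∈ Set.Icc (0 : ℝ) H ∧ p 1 ∈ Set.Icc (0 : ℝ) 1)
    (t : ℝ) (ht : t ∈ Set.Icc (0 : ℝ) H)
    (h1 : min (π t) (1 - π t) ≤ ε)
    (h2 : Metric.hausdorffDist
      {p : EuclideanSpace ℝ (Fin 2) | ∃ u ∈ Set.Icc (0 : ℝ) H,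
        p = (!₂[u, π u] : EuclideanSpace ℝ (Fin 2))} 𝕏 ≤ ε)
    (h3 : ∀ p ∈ 𝕏, |p 0 - t| ≤ ε → |p 1 - x (p 0)| ≤ M)
    (h4 : ∀ s ∈ Set.Icc (0 : ℝ) H, |s - t| ≤ ε → x s = x t) :
    |π t - x t| ≤ ε := by
  obtain ⟨p, hp, hdist⟩ := exists_mem_dist_le_of_hausdorffDist_le
    (x := !₂[t, π t]) (by exact ⟨t, ht, rfl⟩) (isBounded_euclidean_graph hπ) h𝕏c h𝕏ne h2
  have hp0 : |p 0 - t| ≤ ε := by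
    simpa [Real.dist_eq, abs_sub_comm] using (PiLp.dist_apply_le _ p 0).trans hdist
  have hp1 : |π t - p 1| ≤ ε := by
    simpa [Real.dist_eq] using (PiLp.dist_apply_le _ p 1).trans hdist
  have hspike : |p 1 - x t| ≤ M := h4 (p 0) (h𝕏sub p hp).1 hp0 ▸ h3 p hp hp0
  refine abs_sub_le_of_min_le (hπ t ht) (hx t ht) h1 ?_
  calc |π t - x t| ≤ |π t - p 1| + |p 1 - x t| := abs_sub_le _ _ _
    _ < 1 - ε := by linarith

/-- Deterministic reduction lemma: outside excursion intervals, Hausdorff proximity of the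
graph of the filter to the spike set forces `π(t)` to be `ε`-close to the hidden state. -/
theorem filter_close_to_hidden_state_outside_excursions
    (H ε η M : ℝ) (hH : 0 < H) (hε : 0 < ε) (hεη : ε < η) (hη : η < 1 / 2)
    (hM : M < 1 - 2 * η)
    (π x : ℝ → ℝ)
    (hπ : ∀ u ∈ Set.Icc (0 : ℝ) H, π u ∈ Set.Icc (0 : ℝ) 1)
    (hx : ∀ s ∈ Set.Icc (0 : ℝ) H, x s = 0 ∨ x s = 1)
    (𝕏 : Set (EuclideanSpace ℝ (Fin 2)))
    (h𝕏ne : 𝕏.Nonempty) (h𝕏c : IsCompact 𝕏)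
    (h𝕏sub : ∀ p ∈ 𝕏, p 0 ∈ Set.Icc (0 : ℝ) H ∧ p 1 ∈ Set.Icc (0 : ℝ) 1)
    (t : ℝ) (ht : t ∈ Set.Icc (0 : ℝ) H)
    (h1 : min (π t) (1 - π t) ≤ ε)
    (h2 : Metric.hausdorffDist
      {p : EuclideanSpace ℝ (Fin 2) | ∃ u ∈ Set.Icc (0 : ℝ) H,
        p = (!₂[u, π u] : EuclideanSpace ℝ (Fin 2))} 𝕏 ≤ ε)
    (h3 : ∀ p ∈ 𝕏, |p 0 - t| ≤ ε → |p 1 - x (p 0)| ≤ M)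
    (h4 : ∀ s ∈ Set.Icc (0 : ℝ) H, |s - t| ≤ ε → x s = x t) :
    |π t - x t| ≤ ε :=
  filter_close_to_hidden_state_outside_excursions_general H ε η M hεη hM π x hπ hx 𝕏 h𝕏ne h𝕏c h𝕏sub
    t ht h1 h2 h3 h4
end

section
/- Let (Ω, 𝓕, ℙ) be a probability space, let t > 0, and let x : ℝ × Ω → ℝ be a jointly measurable process with x(s, ω) ∈ {0, 1} for all s, ω such that for every ε ∈ (0, t] the event J_ε := {ω : ∃ s ∈ [t−ε, t], x(s, ω) ≠ x(t, ω)} is measurable, and ℙ(J_ε) → 0 as ε → 0⁺. For each γ > 0, let B^γ be a real-valued process such that for all 0 ≤ u ≤ v, B^γ_v − B^γ_u is square-integrable with 𝔼[(B^γ_v − B^γ_u)²] = v − u; define y^γ_u := ∫_0^u x_s ds + γ^{−1/2} B^γ_u, let 𝒢^γ be the σ-algebra generated by (y^γ_s)_{s ≤ t}, and π_t^γ := 𝔼[x(t, ·) | 𝒢^γ]. Then lim_{γ → ∞} 𝔼[(π_t^γ − x(t, ·))²] = 0. -/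
/-!
The filter `π_t^γ` is the best `L²` approximation of `x_t` among `𝒢^γ`-measurable random
variables, so its error is at most that of the difference quotient
`Z = ε⁻¹ (y_t - y_{t-ε})` with window `ε = γ^{-1/2}`. Since the noise enters `y` with
coefficient `ε`, `Z` is the average of `x` over `[t - ε, t]` plus the increment
`B_t - B_{t-ε}`, of variance `ε`. The average differs from `x_t`, by at most `1`, only on
`J_ε`, so the error is at most `2 (ℙ(J_ε) + ε) → 0`.
-/

open MeasureTheory ProbabilityTheory Real Filter Topology Set

section ConditionalExpectation

variable {Ω : Type*} {m mΩ : MeasurableSpace Ω} {μ : Measure Ω} [IsFiniteMeasure μ]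
  {f Z : Ω → ℝ}

theorem integral_mul_condExp_sub_eq_zero (hm : m ≤ mΩ) (hf : MemLp f 2 μ) (hZ : MemLp Z 2 μ)
    (hZm : StronglyMeasurable[m] Z) : ∫ ω, Z ω * (μ[f|m] ω - f ω) ∂μ = 0 := by
  have hZf : Integrable (fun ω => Z ω * f ω) μ := hZ.integrable_mul hf
  have hZp : Integrable (fun ω => Z ω * μ[f|m] ω) μ := hZ.integrable_mul (hf.condExp one_le_two)
  have hpull : ∫ ω, Z ω * μ[f|m] ω ∂μ = ∫ ω, Z ω * f ω ∂μ :=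
    (integral_congr_ae (condExp_mul_of_stronglyMeasurable_left hZm hZf
      (hf.integrable one_le_two))).symm.trans (integral_condExp hm)
  simp_rw [mul_sub]
  rw [integral_sub hZp hZf, hpull, sub_self]

theorem integral_condExp_sub_sq_le (hm : m ≤ mΩ) (hf : MemLp f 2 μ) (hZ : MemLp Z 2 μ)
    (hZm : StronglyMeasurable[m] Z) :
    ∫ ω, (μ[f|m] ω - f ω) ^ 2 ∂μ ≤ ∫ ω, (Z ω - f ω) ^ 2 ∂μ := by
  have hg : MemLp (Z - μ[f|m]) 2 μ := hZ.sub (hf.condExp one_le_two)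
  have hd : MemLp (μ[f|m] - f) 2 μ := (hf.condExp one_le_two).sub hf
  have hg2 : Integrable (fun ω => (Z ω - μ[f|m] ω) ^ 2) μ := hg.integrable_sq
  have hgd : Integrable (fun ω => 2 * ((Z ω - μ[f|m] ω) * (μ[f|m] ω - f ω))) μ :=
    (hg.integrable_mul hd).const_mul 2
  have horth : ∫ ω, 2 * ((Z ω - μ[f|m] ω) * (μ[f|m] ω - f ω)) ∂μ = 0 := by
    have h := integral_mul_condExp_sub_eq_zero hm hf hg (hZm.sub stronglyMeasurable_condExp)
    simp only [Pi.sub_apply] at h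
    rw [integral_const_mul, h, mul_zero]
  have hpyth : (fun ω => (Z ω - f ω) ^ 2) = fun ω => ((Z ω - μ[f|m] ω) ^ 2
      + 2 * ((Z ω - μ[f|m] ω) * (μ[f|m] ω - f ω))) + (μ[f|m] ω - f ω) ^ 2 := by
    ext ω; ring
  have hd2 : Integrable (fun ω => (μ[f|m] ω - f ω) ^ 2) μ := hd.integrable_sq
  have hg2d : Integrable (fun ω => (Z ω - μ[f|m] ω) ^ 2
      + 2 * ((Z ω - μ[f|m] ω) * (μ[f|m] ω - f ω))) μ := hg2.add hgd
  rw [hpyth, integral_add hg2d hd2, integral_add hg2 hgd, horth]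
  have hg2_nonneg : 0 ≤ ∫ ω, (Z ω - μ[f|m] ω) ^ 2 ∂μ := integral_nonneg fun ω => sq_nonneg _
  linarith

end ConditionalExpectation

theorem integral_add_sq_le {Ω : Type*} {mΩ : MeasurableSpace Ω} {μ : Measure Ω} {u v : Ω → ℝ}
    (hu : MemLp u 2 μ) (hv : MemLp v 2 μ) :
    ∫ ω, (u ω + v ω) ^ 2 ∂μ ≤ 2 * (∫ ω, u ω ^ 2 ∂μ + ∫ ω, v ω ^ 2 ∂μ) := by
  rw [← integral_add hu.integrable_sq hv.integrable_sq, ← integral_const_mul]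
  exact integral_mono (hu.add hv).integrable_sq
    ((hu.integrable_sq.add hv.integrable_sq).const_mul 2) fun ω => add_sq_le

theorem MeasureTheory.StronglyMeasurable.intervalIntegral_prod_left' {β E : Type*}
    {mβ : MeasurableSpace β} [NormedAddCommGroup E] [NormedSpace ℝ E] {f : ℝ × β → E}
    (hf : StronglyMeasurable f) (a b : ℝ) : StronglyMeasurable fun y => ∫ s in a..b, f (s, y) := by
  simp_rw [intervalIntegral.intervalIntegral_eq_integral_uIoc]
  exact (hf.integral_prod_left' (μ := volume.restrict (Set.uIoc a b))).const_smul _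

section WindowAverage

variable {g : ℝ → ℝ} {t ε : ℝ}

theorem intervalIntegrable_of_mem_Icc (hg : Measurable g) (h01 : ∀ s, g s ∈ Icc (0 : ℝ) 1)
    (a b : ℝ) : IntervalIntegrable g volume a b :=
  intervalIntegrable_const.mono_fun' (g := fun _ => (1 : ℝ)) hg.aestronglyMeasurable
    (ae_of_all _ fun s => (Real.norm_of_nonneg (h01 s).1).trans_le (h01 s).2)

theorem average_mem_Icc (hε : 0 < ε) (hg : ∀ s, g s ∈ Icc (0 : ℝ) 1) :
    ε⁻¹ * ∫ s in (t - ε)..t, g s ∈ Icc (0 : ℝ) 1 := by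
  have hint_nonneg : 0 ≤ ∫ s in (t - ε)..t, g s :=
    intervalIntegral.integral_nonneg (by linarith) fun s _ => (hg s).1
  have hint_le : ∫ s in (t - ε)..t, g s ≤ ε :=
    calc ∫ s in (t - ε)..t, g s ≤ ‖∫ s in (t - ε)..t, g s‖ := le_norm_self _
      _ ≤ 1 * |t - (t - ε)| := intervalIntegral.norm_integral_le_of_norm_le_const
          fun s _ => by rw [Real.norm_of_nonneg (hg s).1]; exact (hg s).2
      _ = ε := by rw [sub_sub_cancel, abs_of_pos hε, one_mul]
  refine ⟨mul_nonneg (inv_nonneg.2 hε.le) hint_nonneg, ?_⟩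
  calc ε⁻¹ * ∫ s in (t - ε)..t, g s ≤ ε⁻¹ * ε := by gcongr
    _ = 1 := inv_mul_cancel₀ hε.ne'

theorem average_eq_of_forall_eq (hε : 0 < ε) (h : ∀ s ∈ Icc (t - ε) t, g s = g t) :
    ε⁻¹ * ∫ s in (t - ε)..t, g s = g t := by
  rw [intervalIntegral.integral_congr (g := fun _ => g t)
    fun s hs => h s (by rwa [uIcc_of_le (by linarith)] at hs)]
  rw [intervalIntegral.integral_const, sub_sub_cancel, smul_eq_mul, ← mul_assoc,
    inv_mul_cancel₀ hε.ne', one_mul]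

theorem inv_mul_sub_eq_average_add_sub {Y W : ℝ → ℝ} (hε : ε ≠ 0)
    (hg : ∀ a b, IntervalIntegrable g volume a b) (hY : ∀ u, Y u = (∫ s in 0..u, g s) + ε * W u) :
    ε⁻¹ * (Y t - Y (t - ε)) = ε⁻¹ * (∫ s in (t - ε)..t, g s) + (W t - W (t - ε)) := by
  rw [hY, hY, ← intervalIntegral.integral_interval_sub_left (hg 0 t) (hg 0 (t - ε))]
  field_simp
  ring

theorem integral_sq_average_sub_le {Ω : Type*} {mΩ : MeasurableSpace Ω} {μ : Measure Ω}
    [IsFiniteMeasure μ] {x : ℝ × Ω → ℝ} (hx : ∀ s ω, x (s, ω) ∈ Icc (0 : ℝ) 1) (hε : 0 < ε)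
    (hJ : MeasurableSet {ω | ∃ s ∈ Icc (t - ε) t, x (s, ω) ≠ x (t, ω)}) :
    ∫ ω, (ε⁻¹ * (∫ s in (t - ε)..t, x (s, ω)) - x (t, ω)) ^ 2 ∂μ
      ≤ μ.real {ω | ∃ s ∈ Icc (t - ε) t, x (s, ω) ≠ x (t, ω)} := by
  rw [← integral_indicator_one hJ]
  refine integral_mono_of_nonneg (ae_of_all _ fun ω => sq_nonneg _)
    ((integrable_const 1).indicator hJ) (ae_of_all _ fun ω => ?_)
  by_cases hω : ω ∈ {ω | ∃ s ∈ Icc (t - ε) t, x (s, ω) ≠ x (t, ω)}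
  · have ha := average_mem_Icc (t := t) hε (hx · ω)
    have hb := hx t ω
    rw [indicator_of_mem hω, Pi.one_apply]
    nlinarith [ha.1, ha.2, hb.1, hb.2]
  · rw [indicator_of_notMem hω]
    dsimp only
    rw [average_eq_of_forall_eq hε (by simpa using hω), sub_self, zero_pow two_ne_zero]

end WindowAverage

theorem integral_condExp_sub_sq_le_of_noisy_average {Ω : Type*} {m mΩ : MeasurableSpace Ω}
    {μ : Measure Ω} [IsFiniteMeasure μ] (hm : m ≤ mΩ) {x : ℝ × Ω → ℝ} (hx : Measurable x)
    (hx01 : ∀ s ω, x (s, ω) ∈ Icc (0 : ℝ) 1) {t ε : ℝ} (hε : 0 < ε) {b : Ω → ℝ}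
    (hb : MemLp b 2 μ)
    (hZ : StronglyMeasurable[m] fun ω => ε⁻¹ * (∫ s in (t - ε)..t, x (s, ω)) + b ω)
    (hJ : MeasurableSet {ω | ∃ s ∈ Icc (t - ε) t, x (s, ω) ≠ x (t, ω)}) :
    ∫ ω, (μ[fun ω => x (t, ω)|m] ω - x (t, ω)) ^ 2 ∂μ
      ≤ 2 * (μ.real {ω | ∃ s ∈ Icc (t - ε) t, x (s, ω) ≠ x (t, ω)} + ∫ ω, b ω ^ 2 ∂μ) := by
  have hf : MemLp (fun ω => x (t, ω)) 2 μ :=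
    MemLp.of_bound (hx.comp measurable_prodMk_left).aestronglyMeasurable 1 <| ae_of_all _
      fun ω => abs_le.2 ⟨by linarith [(hx01 t ω).1], (hx01 t ω).2⟩
  have ha : MemLp (fun ω => ε⁻¹ * ∫ s in (t - ε)..t, x (s, ω)) 2 μ :=
    MemLp.of_bound ((hx.stronglyMeasurable.intervalIntegral_prod_left' _ _).const_mul
      _).aestronglyMeasurable 1 <| ae_of_all _ fun ω =>
        have h := average_mem_Icc (t := t) hε (hx01 · ω)
        abs_le.2 ⟨by linarith [h.1], h.2⟩
  calc ∫ ω, (μ[fun ω => x (t, ω)|m] ω - x (t, ω)) ^ 2 ∂μ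
      ≤ ∫ ω, (ε⁻¹ * (∫ s in (t - ε)..t, x (s, ω)) + b ω - x (t, ω)) ^ 2 ∂μ :=
        integral_condExp_sub_sq_le hm hf (ha.add hb) hZ
    _ = ∫ ω, ((ε⁻¹ * (∫ s in (t - ε)..t, x (s, ω)) - x (t, ω)) + b ω) ^ 2 ∂μ := by
        congr 1; ext ω; ring
    _ ≤ 2 * (∫ ω, (ε⁻¹ * (∫ s in (t - ε)..t, x (s, ω)) - x (t, ω)) ^ 2 ∂μ
          + ∫ ω, b ω ^ 2 ∂μ) := integral_add_sq_le (ha.sub hf) hb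
    _ ≤ 2 * (μ.real {ω | ∃ s ∈ Icc (t - ε) t, x (s, ω) ≠ x (t, ω)} + ∫ ω, b ω ^ 2 ∂μ) := by
        gcongr
        exact integral_sq_average_sub_le hx01 hε hJ

theorem integral_condExp_sub_sq_le_of_observation {Ω : Type*} {mΩ : MeasurableSpace Ω}
    {μ : Measure Ω} [IsFiniteMeasure μ] {x : ℝ × Ω → ℝ} (hx : Measurable x)
    (hx01 : ∀ s ω, x (s, ω) ∈ Icc (0 : ℝ) 1) {t ε : ℝ} (hε : 0 < ε) {W Y : ℝ → Ω → ℝ}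
    (hW : ∀ s, Measurable (W s)) (hWL2 : MemLp (fun ω => W t ω - W (t - ε) ω) 2 μ)
    (hY : ∀ u ω, Y u ω = (∫ s in 0..u, x (s, ω)) + ε * W u ω)
    (hJ : MeasurableSet {ω | ∃ s ∈ Icc (t - ε) t, x (s, ω) ≠ x (t, ω)}) :
    ∫ ω, (μ[fun ω => x (t, ω)|⨆ s ∈ Iic t, MeasurableSpace.comap (Y s) inferInstance] ω
        - x (t, ω)) ^ 2 ∂μ
      ≤ 2 * (μ.real {ω | ∃ s ∈ Icc (t - ε) t, x (s, ω) ≠ x (t, ω)}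
        + ∫ ω, (W t ω - W (t - ε) ω) ^ 2 ∂μ) := by
  have hY_meas : ∀ s, Measurable (Y s) := fun s => by
    rw [funext (hY s)]
    exact (hx.stronglyMeasurable.intervalIntegral_prod_left' 0 s).measurable.add
      ((hW s).const_mul _)
  have hY_obs : ∀ s ≤ t, Measurable[⨆ s ∈ Iic t, MeasurableSpace.comap (Y s) inferInstance]
      (Y s) := fun s hs =>
    Measurable.of_comap_le (le_iSup₂ (f := fun s (_ : s ∈ Iic t) =>
      MeasurableSpace.comap (Y s) inferInstance) s hs)
  have hZ : (fun ω => ε⁻¹ * (Y t ω - Y (t - ε) ω)) = fun ω =>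
      ε⁻¹ * (∫ s in (t - ε)..t, x (s, ω)) + (W t ω - W (t - ε) ω) :=
    funext fun ω => inv_mul_sub_eq_average_add_sub hε.ne'
      (intervalIntegrable_of_mem_Icc (hx.comp measurable_prodMk_right) (hx01 · ω)) (hY · ω)
  exact integral_condExp_sub_sq_le_of_noisy_average
    (iSup₂_le fun s _ => (hY_meas s).comap_le) hx hx01 hε hWL2
    (hZ ▸ (((hY_obs t le_rfl).sub (hY_obs _ (by linarith))).const_mul _).stronglyMeasurable) hJ

/-- Claim (2.7): in the weak observation-noise limit `γ → ∞`, the optimal filter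
`π_t^γ = E[x_t | σ((y_s^γ)_{s ≤ t})]` converges to `x_t` in `L²(Ω)`. -/
theorem filter_L2_convergence
    {Ω : Type*} [MeasureSpace Ω] [IsProbabilityMeasure (ℙ : Measure Ω)]
    (t : ℝ) (ht : 0 < t)
    (x : ℝ × Ω → ℝ) (hx_meas : Measurable x)
    (hx01 : ∀ s ω, x (s, ω) = 0 ∨ x (s, ω) = 1)
    (J : ℝ → Set Ω)
    (hJ : ∀ ε ∈ Set.Ioc (0 : ℝ) t,
      J ε = {ω | ∃ s ∈ Set.Icc (t - ε) t, x (s, ω) ≠ x (t, ω)})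
    (hJmeas : ∀ ε ∈ Set.Ioc (0 : ℝ) t, MeasurableSet (J ε))
    (hJlim : Tendsto (fun ε => ℙ (J ε)) (𝓝[>] (0 : ℝ)) (𝓝 0))
    (B : ℝ → ℝ → Ω → ℝ)
    (hBmeas : ∀ γ > (0 : ℝ), ∀ s : ℝ, Measurable (B γ s))
    (hBL2 : ∀ γ > (0 : ℝ), ∀ u v : ℝ, 0 ≤ u → u ≤ v →
      MemLp (fun ω => B γ v ω - B γ u ω) 2 ℙ)
    (hBvar : ∀ γ > (0 : ℝ), ∀ u v : ℝ, 0 ≤ u → u ≤ v →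
      ∫ ω, (B γ v ω - B γ u ω) ^ 2 ∂ℙ = v - u)
    (y : ℝ → ℝ → Ω → ℝ)
    (hy : ∀ γ > (0 : ℝ), ∀ u : ℝ, ∀ ω : Ω,
      y γ u ω = (∫ s in (0 : ℝ)..u, x (s, ω)) + (Real.sqrt γ)⁻¹ * B γ u ω)
    (𝒢 : ℝ → MeasurableSpace Ω)
    (h𝒢 : ∀ γ : ℝ, 𝒢 γ = ⨆ s ∈ Set.Iic t,
      MeasurableSpace.comap (y γ s) (inferInstance : MeasurableSpace ℝ)) :
    Tendsto (fun γ => ∫ ω, ((ℙ[fun ω' => x (t, ω')|𝒢 γ]) ω - x (t, ω)) ^ 2 ∂ℙ)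
      atTop (𝓝 0) := by
  have hx01' : ∀ s ω, x (s, ω) ∈ Icc (0 : ℝ) 1 := fun s ω => by
    rcases hx01 s ω with h | h <;> simp [h]
  have hε : Tendsto (fun γ => (√γ)⁻¹) atTop (𝓝[>] 0) :=
    tendsto_inv_atTop_nhdsGT_zero.comp tendsto_sqrt_atTop
  have hεt : ∀ᶠ γ in atTop, (√γ)⁻¹ ∈ Ioo 0 t := hε (Ioo_mem_nhdsGT ht)
  have hbound : ∀ᶠ γ in atTop, ∫ ω, ((ℙ[fun ω' => x (t, ω')|𝒢 γ]) ω - x (t, ω)) ^ 2 ∂ℙ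
      ≤ 2 * (Measure.real ℙ (J (√γ)⁻¹) + (√γ)⁻¹) := by
    filter_upwards [eventually_gt_atTop 0, hεt] with γ hγ ⟨hε0, hεt⟩
    have hεJ : (√γ)⁻¹ ∈ Ioc 0 t := ⟨hε0, hεt.le⟩
    have key := integral_condExp_sub_sq_le_of_observation hx_meas hx01' hε0 (hBmeas γ hγ)
      (hBL2 γ hγ _ _ (by linarith) (by linarith)) (hy γ hγ) (hJ _ hεJ ▸ hJmeas _ hεJ)
    rwa [← h𝒢, ← hJ _ hεJ, hBvar γ hγ _ _ (by linarith) (by linarith), sub_sub_cancel] at key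
  refine squeeze_zero' (Eventually.of_forall fun γ => integral_nonneg fun ω => sq_nonneg _)
    hbound ?_
  have hJε : Tendsto (fun γ => Measure.real ℙ (J (√γ)⁻¹)) atTop (𝓝 0) :=
    (ENNReal.tendsto_toReal ENNReal.zero_ne_top).comp (hJlim.comp hε)
  simpa using (hJε.add (tendsto_nhds_of_tendsto_nhdsWithin hε)).const_mul 2
end

section
/- Let λ > 0, γ > 0, p ∈ (0, 1), and x₀ ∈ (0, 1). Define g : (0, 1) → ℝ by g(y) := p(1/y + log((1−y)/y)) + (1−p)(1/(1−y) + log(y/(1−y))), and h : (0, 1) → ℝ by h(x) := x₀ + ∫_{x₀}^x exp((2λ/γ) g(y)) dy. Then h is strictly increasing on (0, 1), h(x) → −∞ as x → 0⁺, and h(x) → +∞ as x → 1⁻. -/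
open Real Filter Topology Set MeasureTheory

/-!
The integrand `exp (c g)`, `c = 2λ/γ`, is positive and continuous on `(0, 1)`, so `h` is
strictly increasing. Near `0` the exponent `c g(y) = c p / y + O(log y)` eventually dominates
`-log y`, so the integrand is at least `1 / y` and `h x ≤ C + log x → -∞`. The end `1` reduces to
the end `0` through the symmetry `g_p (1 - y) = g_{1-p} (y)` of the exponent.
-/

noncomputable def scaleExponent (p y : ℝ) : ℝ :=
  p * (1 / y + log ((1 - y) / y)) + (1 - p) * (1 / (1 - y) + log (y / (1 - y)))

theorem scaleExponent_one_sub (p y : ℝ) : scaleExponent p (1 - y) = scaleExponent (1 - p) y := by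
  simp only [scaleExponent, sub_sub_cancel]
  ring

theorem continuousOn_scaleExponent (p : ℝ) : ContinuousOn (scaleExponent p) (Ioo 0 1) := by
  refine continuousOn_of_forall_continuousAt fun y hy => ?_
  have hy₀ : y ≠ 0 := hy.1.ne'
  have hy₁ : 1 - y ≠ 0 := (sub_pos.2 hy.2).ne'
  unfold scaleExponent
  fun_prop (disch := first | assumption | exact div_ne_zero ‹_› ‹_›)

theorem tendsto_div_add_mul_log_nhdsGT_zero {a : ℝ} (ha : 0 < a) (b : ℝ) :
    Tendsto (fun s => a / s + b * log s) (𝓝[>] 0) atTop := by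
  have hlim : Tendsto (fun s => a + b * (log s * s)) (𝓝[>] 0) (𝓝 a) := by
    simpa using (tendsto_log_mul_rpow_nhdsGT_zero one_pos).const_mul b |>.const_add a
  refine (tendsto_inv_nhdsGT_zero.atTop_mul_pos ha hlim).congr' ?_
  filter_upwards [self_mem_nhdsWithin] with s (hs : 0 < s)
  field_simp

theorem tendsto_mul_scaleExponent_add_log_nhdsGT_zero {c p : ℝ} (hc : 0 < c) (hp : 0 < p) :
    Tendsto (fun y => c * scaleExponent p y + log y) (𝓝[>] 0) atTop := by
  have hsingular := tendsto_div_add_mul_log_nhdsGT_zero (mul_pos hc hp) (1 + c * (1 - 2 * p))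
  have hregular : ContinuousAt
      (fun y => c * (1 - p) / (1 - y) + c * (2 * p - 1) * log (1 - y)) 0 := by
    fun_prop (disch := norm_num)
  refine (hsingular.atTop_add (hregular.tendsto.mono_left nhdsWithin_le_nhds)).congr' ?_
  filter_upwards [Ioo_mem_nhdsGT one_pos] with y hy
  have hy₀ : y ≠ 0 := hy.1.ne'
  have hy₁ : 1 - y ≠ 0 := (sub_pos.2 hy.2).ne'
  simp only [scaleExponent, log_div hy₁ hy₀, log_div hy₀ hy₁]
  ring

theorem eventually_inv_le_exp_mul_scaleExponent {c p : ℝ} (hc : 0 < c) (hp : 0 < p) :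
    ∀ᶠ y in 𝓝[>] 0, y⁻¹ ≤ exp (c * scaleExponent p y) := by
  filter_upwards [(tendsto_mul_scaleExponent_add_log_nhdsGT_zero hc hp).eventually_ge_atTop 0,
    self_mem_nhdsWithin] with y hy (hy₀ : 0 < y)
  rw [← exp_log (inv_pos.2 hy₀), log_inv]
  exact exp_le_exp.2 (by linarith)

theorem strictMonoOn_integral_of_pos {f : ℝ → ℝ} {s : Set ℝ} [s.OrdConnected] {x₀ : ℝ}
    (hf : ContinuousOn f s) (hpos : ∀ y ∈ s, 0 < f y) (hx₀ : x₀ ∈ s) :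
    StrictMonoOn (fun x => ∫ y in x₀..x, f y) s := by
  have hint : ∀ a ∈ s, ∀ b ∈ s, IntervalIntegrable f volume a b := fun a ha b hb =>
    (hf.mono (‹s.OrdConnected›.uIcc_subset ha hb)).intervalIntegrable
  intro a ha b hb hab
  have hdiff :=
    intervalIntegral.integral_interval_sub_left (hint x₀ hx₀ b hb) (hint x₀ hx₀ a ha)
  have hpos' : 0 < ∫ y in a..b, f y :=
    intervalIntegral.intervalIntegral_pos_of_pos_on (hint a ha b hb)
      (fun y hy => hpos y (Set.Icc_subset s ha hb (Ioo_subset_Icc_self hy))) hab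
  change ∫ y in x₀..a, f y < ∫ y in x₀..b, f y
  linarith

theorem tendsto_integral_nhdsGT_zero_atBot_of_inv_le {f : ℝ → ℝ} {x₀ : ℝ} (hx₀ : 0 < x₀)
    (hf : ContinuousOn f (Ioc 0 x₀)) (hle : ∀ᶠ y in 𝓝[>] 0, y⁻¹ ≤ f y) :
    Tendsto (fun x => ∫ y in x₀..x, f y) (𝓝[>] 0) atBot := by
  obtain ⟨u, hu, hsub⟩ := mem_nhdsGT_iff_exists_Ioc_subset.1 hle
  set δ := min u x₀
  have hδ : δ ∈ Ioc 0 x₀ := ⟨lt_min hu hx₀, min_le_right _ _⟩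
  have hint : ∀ a ∈ Ioc 0 x₀, ∀ b ∈ Ioc 0 x₀, IntervalIntegrable f volume a b :=
    fun a ha b hb => (hf.mono (ordConnected_Ioc.uIcc_subset ha hb)).intervalIntegrable
  have hbound : ∀ x ∈ Ioo 0 δ, ∫ y in x₀..x, f y ≤ (∫ y in x₀..δ, f y) - log δ + log x := by
    intro x hx
    have hx' : x ∈ Ioc 0 x₀ := ⟨hx.1, hx.2.le.trans hδ.2⟩
    have hsplit := intervalIntegral.integral_interval_sub_left
      (hint x₀ (right_mem_Ioc.2 hx₀) δ hδ) (hint x₀ (right_mem_Ioc.2 hx₀) x hx')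
    have hinv : IntervalIntegrable (fun y => y⁻¹) volume x δ :=
      intervalIntegrable_inv_iff.2 (.inr (notMem_uIcc_of_lt hx.1 hδ.1))
    have hcompare : ∫ y in x..δ, y⁻¹ ≤ ∫ y in x..δ, f y :=
      intervalIntegral.integral_mono_on hx.2.le hinv (hint x hx' δ hδ)
        fun y hy => hsub ⟨hx.1.trans_le hy.1, hy.2.trans (min_le_left _ _)⟩
    rw [integral_inv_of_pos hx.1 hδ.1, log_div hδ.1.ne' hx.1.ne'] at hcompare
    linarith
  refine tendsto_atBot_mono' _ ?_
    (tendsto_atBot_add_const_left _ ((∫ y in x₀..δ, f y) - log δ) tendsto_log_nhdsGT_zero)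
  filter_upwards [Ioo_mem_nhdsGT hδ.1] with x hx using hbound x hx

theorem tendsto_one_sub_nhdsLT_one : Tendsto (fun x : ℝ => 1 - x) (𝓝[<] 1) (𝓝[>] 0) := by
  refine tendsto_nhdsWithin_iff.2 ⟨?_, ?_⟩
  · simpa using ((continuous_sub_left (1 : ℝ)).tendsto 1).mono_left nhdsWithin_le_nhds
  · filter_upwards [self_mem_nhdsWithin] with x (hx : x < 1)
    exact sub_pos.2 hx

/-- The scale function `h` is a strictly increasing bijection from `(0,1)` onto `ℝ`:
it is strictly monotone, tends to `-∞` at `0⁺` and to `+∞` at `1⁻`. -/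
theorem scale_function_strictMono_and_unbounded
    (lam γ p x₀ : ℝ) (hlam : 0 < lam) (hγ : 0 < γ)
    (hp : p ∈ Set.Ioo (0 : ℝ) 1) (hx₀ : x₀ ∈ Set.Ioo (0 : ℝ) 1)
    (g h : ℝ → ℝ)
    (hg : g = fun y => p * (1 / y + Real.log ((1 - y) / y))
      + (1 - p) * (1 / (1 - y) + Real.log (y / (1 - y))))
    (hh : h = fun x => x₀ + ∫ y in x₀..x, Real.exp (2 * lam / γ * g y)) :
    StrictMonoOn h (Set.Ioo (0 : ℝ) 1) ∧
    Tendsto h (𝓝[>] (0 : ℝ)) atBot ∧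
    Tendsto h (𝓝[<] (1 : ℝ)) atTop := by
  set c := 2 * lam / γ
  have hc : 0 < c := by positivity
  set F := fun x => ∫ y in x₀..x, exp (c * scaleExponent p y)
  have hF : h = fun x => x₀ + F x := by subst hg hh; rfl
  have hcont (q : ℝ) : ContinuousOn (fun y => exp (c * scaleExponent q y)) (Ioo 0 1) :=
    continuous_exp.comp_continuousOn (continuousOn_const.mul (continuousOn_scaleExponent q))
  have hmono : StrictMonoOn F (Ioo 0 1) :=
    strictMonoOn_integral_of_pos (hcont p) (fun y _ => exp_pos _) hx₀
  have hzero : Tendsto F (𝓝[>] 0) atBot :=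
    tendsto_integral_nhdsGT_zero_atBot_of_inv_le hx₀.1
      ((hcont p).mono (Ioc_subset_Ioo_right hx₀.2))
      (eventually_inv_le_exp_mul_scaleExponent hc hp.1)
  have hreflect (x : ℝ) :
      F x = -∫ y in (1 - x₀)..(1 - x), exp (c * scaleExponent (1 - p) y) := by
    simp only [F, ← scaleExponent_one_sub, intervalIntegral.integral_comp_sub_left
      (fun y => exp (c * scaleExponent p y)), sub_sub_cancel, intervalIntegral.integral_symm x]
  have hone : Tendsto F (𝓝[<] 1) atTop := by
    have hzero' := tendsto_integral_nhdsGT_zero_atBot_of_inv_le (sub_pos.2 hx₀.2)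
      ((hcont (1 - p)).mono (Ioc_subset_Ioo_right (sub_lt_self 1 hx₀.1)))
      (eventually_inv_le_exp_mul_scaleExponent hc (sub_pos.2 hp.2))
    exact (tendsto_neg_atBot_atTop.comp (hzero'.comp tendsto_one_sub_nhdsLT_one)).congr
      fun x => (hreflect x).symm
  rw [hF]
  exact ⟨fun a ha b hb hab => add_lt_add_right (hmono ha hb hab) x₀,
    tendsto_atBot_add_const_left _ x₀ hzero, tendsto_atTop_add_const_left _ x₀ hone⟩
end

section
/- Let 0 < C < 2 and let e : ℝ → ℝ be a function with e(γ) → 0 as γ → +∞. Then lim_{γ → +∞} (log γ) · ∫_0^{C/2} γ^{e(γ) − (1 − √w)²} dw = 0. -/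
open Real Filter Topology

lemma aux_log_mul_rpow (r : ℝ) (hr : 0 < r) :
    Tendsto (fun x : ℝ => Real.log x * x ^ (-r)) atTop (𝓝 0) := by
  have h := (isLittleO_log_rpow_atTop hr).tendsto_div_nhds_zero
  refine h.congr' ?_
  filter_upwards [eventually_gt_atTop (0:ℝ)] with x hx
  rw [div_eq_mul_inv, ← Real.rpow_neg hx.le]

/-- The analytic estimate concluding the fast-feedback regime: for `C < 2`,
`(log γ) ∫_0^{C/2} γ^{o(1) - (1-√w)²} dw → 0` as `γ → ∞`. -/
theorem fast_feedback_damping_estimate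
    (C : ℝ) (hC0 : 0 < C) (hC2 : C < 2)
    (e : ℝ → ℝ) (he : Tendsto e atTop (𝓝 0)) :
    Tendsto
      (fun γ : ℝ => Real.log γ *
        ∫ w in (0 : ℝ)..(C / 2), γ ^ (e γ - (1 - Real.sqrt w) ^ 2))
      atTop (𝓝 0) := by
  set ε : ℝ := (1 - Real.sqrt (C / 2)) ^ 2 with hε
  have hsqrt : Real.sqrt (C / 2) < 1 := by
    rw [show (1:ℝ) = Real.sqrt 1 by simp]
    exact Real.sqrt_lt_sqrt (by positivity) (by linarith)
  have hεpos : 0 < ε := pow_pos (by linarith) 2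
  -- the key bound on the exponent constant part
  have hupper : ∀ᶠ γ : ℝ in atTop,
      Real.log γ * ∫ w in (0:ℝ)..(C/2), γ ^ (e γ - (1 - Real.sqrt w) ^ 2)
        ≤ Real.log γ * (C / 2 * γ ^ (e γ - ε)) := by
    filter_upwards [eventually_ge_atTop (1:ℝ)] with γ hγ
    have hγ0 : (0:ℝ) < γ := lt_of_lt_of_le one_pos hγ
    have hcont : Continuous fun w : ℝ => γ ^ (e γ - (1 - Real.sqrt w) ^ 2) := by
      apply continuous_const.rpow (by continuity) (fun w => Or.inl (ne_of_gt hγ0))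
    have hint : IntervalIntegrable (fun w : ℝ => γ ^ (e γ - (1 - Real.sqrt w) ^ 2))
        MeasureTheory.volume 0 (C/2) := hcont.intervalIntegrable _ _
    have hbound : ∫ w in (0:ℝ)..(C/2), γ ^ (e γ - (1 - Real.sqrt w) ^ 2)
        ≤ ∫ _w in (0:ℝ)..(C/2), γ ^ (e γ - ε) := by
      apply intervalIntegral.integral_mono_on (by linarith) hint
        (intervalIntegrable_const)
      intro w hw
      apply Real.rpow_le_rpow_of_exponent_le hγ
      have h1 : Real.sqrt w ≤ Real.sqrt (C/2) := Real.sqrt_le_sqrt hw.2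
      have h2 : 0 ≤ 1 - Real.sqrt (C/2) := by linarith
      have : ε ≤ (1 - Real.sqrt w) ^ 2 := by
        apply pow_le_pow_left₀ h2; linarith
      linarith
    rw [intervalIntegral.integral_const, smul_eq_mul, sub_zero] at hbound
    exact mul_le_mul_of_nonneg_left hbound (Real.log_nonneg hγ)
  have hlower : ∀ᶠ γ : ℝ in atTop,
      0 ≤ Real.log γ * ∫ w in (0:ℝ)..(C/2), γ ^ (e γ - (1 - Real.sqrt w) ^ 2) := by
    filter_upwards [eventually_ge_atTop (1:ℝ)] with γ hγ
    have hγ0 : (0:ℝ) < γ := lt_of_lt_of_le one_pos hγ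
    apply mul_nonneg (Real.log_nonneg hγ)
    apply intervalIntegral.integral_nonneg (by linarith)
    intro w _
    positivity
  -- the majorant tends to 0
  have hmaj : Tendsto (fun γ : ℝ => Real.log γ * (C / 2 * γ ^ (e γ - ε)))
      atTop (𝓝 0) := by
    have key : Tendsto (fun γ : ℝ => Real.log γ * γ ^ (e γ - ε)) atTop (𝓝 0) := by
      have h0 := aux_log_mul_rpow (ε/2) (by linarith)
      apply squeeze_zero' ?_ ?_ h0
      · filter_upwards [eventually_ge_atTop (1:ℝ)] with γ hγ
        have hγ0 : (0:ℝ) < γ := lt_of_lt_of_le one_pos hγ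
        exact mul_nonneg (Real.log_nonneg hγ) (Real.rpow_nonneg hγ0.le _)
      · filter_upwards [eventually_ge_atTop (1:ℝ),
          he.eventually (eventually_le_nhds (by linarith : (0:ℝ) < ε/2))]
          with γ hγ heγ
        apply mul_le_mul_of_nonneg_left _ (Real.log_nonneg hγ)
        apply Real.rpow_le_rpow_of_exponent_le hγ
        linarith
    have := key.const_mul (C/2)
    simpa [mul_comm, mul_left_comm, mul_assoc] using this
  exact squeeze_zero' hlower hupper hmaj
end
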